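/- arXiv:1612.08652 — 6 statements merged into one kernel-verified Lean document; each statement's English description precedes it below -/
import Mathlib

section
/- The action D(u,r)·v(n) = ((u | n+α)v + (r'u)v)(n+r) makes F^α_b(V) = V ⊗ Aₙ into a module over the Witt algebra Wₙ; i.e., for all u,v ∈ ℂⁿ, r,s ∈ ℤⁿ, the operators satisfy [D(u,r), D(v,s)]·x = D((u|s)v − (v|r)u, r+s)·x for all x ∈ F^α_b(V). -/
/-!
On `w(m)` the operator `D(u,r)` acts by the endomorphism `T(u,r,m) = (u | m+α) + ρ(r'u)` of `V`
followed by the shift `m ↦ m + r`, so the commutator relation is an identity between products of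
such endomorphisms. Expanding it, the scalar parts cancel up to `(u|s)(v|m+α) − (v|r)(u|m+α)`,
and the matrix parts reduce, via `ρ[A, B] = [ρA, ρB]`, to the rank-one identity
`[r'u, s'v] + (u|s) s'v − (v|r) r'u = (r+s)'((u|s)v − (v|r)u)`, which follows from
`(r'u)(s'v) = (u|s) r'v`.
-/

/-- The outer product matrix r'u with (i,j) entry rᵢuⱼ. -/
def outerMat {n : ℕ} (u v : Fin n → ℂ) : Matrix (Fin n) (Fin n) ℂ :=
  Matrix.of fun i j => u i * v j

/-- The Shen–Larsson operator D(u,r) on F^α_b(V) = V ⊗ ℂ[ℤⁿ], modeled as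
    (Fin n → ℤ) →₀ V with v(m) = single m v:
    D(u,r)·v(m) = ((u|m+α)v + (r'u)v)(m+r). -/
noncomputable def ShenD {n : ℕ} {V : Type*} [AddCommGroup V] [Module ℂ V]
    (ρ : Matrix (Fin n) (Fin n) ℂ →ₗ[ℂ] Module.End ℂ V) (α : Fin n → ℂ)
    (u : Fin n → ℂ) (r : Fin n → ℤ) :
    ((Fin n → ℤ) →₀ V) →ₗ[ℂ] ((Fin n → ℤ) →₀ V) :=
  Finsupp.lsum ℂ fun m =>
    (Finsupp.lsingle (m + r)).comp
      ((∑ i, u i * ((m i : ℂ) + α i)) • (LinearMap.id : V →ₗ[ℂ] V)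
        + (ρ (outerMat (fun i => (r i : ℂ)) u) : V →ₗ[ℂ] V))

open Matrix

theorem outerMat_eq_vecMulVec {n : ℕ} (u v : Fin n → ℂ) : outerMat u v = vecMulVec u v := rfl

theorem vecMulVec_lie_vecMulVec {ι R : Type*} [Fintype ι] [CommRing R] (u v r s : ι → R) :
    vecMulVec r u * vecMulVec s v - vecMulVec s v * vecMulVec r u
        + (u ⬝ᵥ s) • vecMulVec s v - (v ⬝ᵥ r) • vecMulVec r u
      = vecMulVec (r + s) ((u ⬝ᵥ s) • v - (v ⬝ᵥ r) • u) := by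
  simp only [vecMulVec_mul_vecMulVec, vecMulVec_smul, add_vecMulVec, vecMulVec_sub]
  module

section ShenLarsson

variable {n : ℕ} {V : Type*} [AddCommGroup V] [Module ℂ V]
  (ρ : Matrix (Fin n) (Fin n) ℂ →ₗ[ℂ] Module.End ℂ V) (α : Fin n → ℂ)

noncomputable def shenEnd (u : Fin n → ℂ) (r m : Fin n → ℤ) : Module.End ℂ V :=
  (u ⬝ᵥ fun i => (m i : ℂ) + α i) • 1 + ρ (outerMat (fun i => (r i : ℂ)) u)

theorem ShenD_single (u : Fin n → ℂ) (r m : Fin n → ℤ) (w : V) :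
    ShenD ρ α u r (Finsupp.single m w) = Finsupp.single (m + r) (shenEnd ρ α u r m w) := by
  simp [ShenD, shenEnd, dotProduct]

theorem shenEnd_commutator
    (hρ : ∀ A B : Matrix (Fin n) (Fin n) ℂ, ρ (A * B - B * A) = ρ A * ρ B - ρ B * ρ A)
    (u v : Fin n → ℂ) (r s m : Fin n → ℤ) :
    shenEnd ρ α u r (m + s) * shenEnd ρ α v s m - shenEnd ρ α v s (m + r) * shenEnd ρ α u r m
      = shenEnd ρ α ((u ⬝ᵥ fun i => (s i : ℂ)) • v - (v ⬝ᵥ fun i => (r i : ℂ)) • u) (r + s) m := by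
  set r' : Fin n → ℂ := fun i => (r i : ℂ)
  set s' : Fin n → ℂ := fun i => (s i : ℂ)
  set μ : Fin n → ℂ := fun i => (m i : ℂ) + α i
  have shift : ∀ t : Fin n → ℤ, (fun i => ((m + t) i : ℂ) + α i) = μ + fun i => (t i : ℂ) := by
    intro t; ext i; push_cast [Pi.add_apply]; ring
  have cast_add : (fun i => ((r + s) i : ℂ)) = r' + s' := by ext i; push_cast [Pi.add_apply]; rfl
  have hcomm := hρ (vecMulVec r' u) (vecMulVec s' v)
  rw [map_sub] at hcomm
  simp only [shenEnd, shift, cast_add, outerMat_eq_vecMulVec, ← vecMulVec_lie_vecMulVec,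
    dotProduct_add, sub_dotProduct, smul_dotProduct, smul_eq_mul, map_add, map_sub, map_smul,
    hcomm, add_mul, mul_add, smul_mul_assoc, mul_smul_comm, one_mul, mul_one]
  module

theorem ShenD_commutator
    (hρ : ∀ A B : Matrix (Fin n) (Fin n) ℂ, ρ (A * B - B * A) = ρ A * ρ B - ρ B * ρ A)
    (u v : Fin n → ℂ) (r s : Fin n → ℤ) :
    ShenD ρ α u r ∘ₗ ShenD ρ α v s - ShenD ρ α v s ∘ₗ ShenD ρ α u r
      = ShenD ρ α ((u ⬝ᵥ fun i => (s i : ℂ)) • v - (v ⬝ᵥ fun i => (r i : ℂ)) • u) (r + s) := by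
  refine Finsupp.lhom_ext fun m w => ?_
  have hmr : m + r + s = m + (r + s) := add_assoc m r s
  have hms : m + s + r = m + (r + s) := by rw [add_assoc, add_comm s]
  simp only [LinearMap.sub_apply, LinearMap.comp_apply, ShenD_single, hmr, hms,
    ← Finsupp.single_sub, ← shenEnd_commutator ρ α hρ, Module.End.mul_apply]

end ShenLarsson

theorem shen_larsson_is_module_general {n : ℕ} {V : Type*} [AddCommGroup V] [Module ℂ V]
    (ρ : Matrix (Fin n) (Fin n) ℂ →ₗ[ℂ] Module.End ℂ V)
    (hρ : ∀ A B : Matrix (Fin n) (Fin n) ℂ, ρ (A * B - B * A) = ρ A * ρ B - ρ B * ρ A)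
    (α : Fin n → ℂ)
    (u v : Fin n → ℂ) (r s : Fin n → ℤ) (x : (Fin n → ℤ) →₀ V) :
    (ShenD ρ α u r) ((ShenD ρ α v s) x) - (ShenD ρ α v s) ((ShenD ρ α u r) x)
      = ShenD ρ α ((∑ i, u i * (s i : ℂ)) • v - (∑ i, v i * (r i : ℂ)) • u) (r + s) x :=
  LinearMap.congr_fun (ShenD_commutator ρ α hρ u v r s) x

/-- F^α_b(V) is a module over the Witt algebra: the operators D(u,r) satisfy
    [D(u,r), D(v,s)]·x = D((u|s)v − (v|r)u, r+s)·x. -/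
theorem shen_larsson_is_module {n : ℕ} {V : Type*} [AddCommGroup V] [Module ℂ V]
    (ρ : Matrix (Fin n) (Fin n) ℂ →ₗ[ℂ] Module.End ℂ V)
    (hρ : ∀ A B : Matrix (Fin n) (Fin n) ℂ, ρ (A * B - B * A) = ρ A * ρ B - ρ B * ρ A)
    (α : Fin n → ℂ) (b : ℂ) (hb : ρ 1 = b • 1)
    (u v : Fin n → ℂ) (r s : Fin n → ℤ) (x : (Fin n → ℤ) →₀ V) :
    (ShenD ρ α u r) ((ShenD ρ α v s) x) - (ShenD ρ α v s) ((ShenD ρ α u r) x)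
      = ShenD ρ α ((∑ i, u i * (s i : ℂ)) • v - (∑ i, v i * (r i : ℂ)) • u) (r + s) x :=
  shen_larsson_is_module_general ρ hρ α u v r s x
end

section
/- The span of the operators Ē_{ij} = tᵢtⱼ^{-1}∂ⱼ (1≤i,j≤n), Ē_{i,n+1} = −tᵢΣⱼ∂ⱼ, Ē_{n+1,i} = tᵢ^{-1}∂ᵢ, Ē_{n+1,n+1} = −Σⱼ∂ⱼ inside the Witt algebra Wₙ satisfies the gl_{n+1} commutation relations [Ē_{ab}, Ē_{cd}] = δ_{bc}Ē_{ad} − δ_{da}Ē_{cb} for all 1 ≤ a,b,c,d ≤ n+1. -/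
/-!
With `D(u, r) = t^r Σᵢ uᵢ ∂ᵢ` and `(u|m) = Σᵢ uᵢ mᵢ` one has
`[D(u, r), D(v, s)] = D((u|s) v - (v|r) u, r + s)`, and `Ē_{ab} = D(u(b), χ(a) - χ(b))`.
Since `(u(b) | χ(c) - χ(d)) = δ_{bc} - δ_{bd}`, the two `δ_{bd}` terms of `[Ē_{ab}, Ē_{cd}]` cancel,
and whenever a surviving Kronecker delta is `1` the shift `χ(a) - χ(b) + χ(c) - χ(d)` collapses to
`χ(a) - χ(d)` resp. `χ(c) - χ(b)`.
-/

/- A_n = ℂ[t₁^{±1},…,tₙ^{±1}] modeled as (Fin n → ℤ) →₀ ℂ with t^m = single m 1. -/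

/-- The derivation D(u,r) = t^r Σᵢ uᵢ tᵢ ∂/∂tᵢ. -/
noncomputable def LaurentD {n : ℕ} (u : Fin n → ℂ) (r : Fin n → ℤ) :
    ((Fin n → ℤ) →₀ ℂ) →ₗ[ℂ] ((Fin n → ℤ) →₀ ℂ) :=
  Finsupp.lsum ℂ fun m => (∑ i, u i * (m i : ℂ)) • Finsupp.lsingle (m + r)

/-- χ(a) = e_a for a ≤ n, and 0 for a = n+1 (indices taken in Fin (n+1)). -/
def chiVec (n : ℕ) (a : Fin (n + 1)) : Fin n → ℤ :=
  fun k => if (a : ℕ) = (k : ℕ) then 1 else 0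

/-- u(b) = e_b for b ≤ n, and −(1,…,1) for b = n+1. -/
def uVec (n : ℕ) (b : Fin (n + 1)) : Fin n → ℂ :=
  fun k => if (b : ℕ) = n then -1 else if (b : ℕ) = (k : ℕ) then 1 else 0

/-- The vector fields Ē_{ab} inside the Witt algebra:
    Ē_{ij} = tᵢtⱼ⁻¹∂ⱼ, Ē_{i,n+1} = −tᵢΣⱼ∂ⱼ, Ē_{n+1,i} = tᵢ⁻¹∂ᵢ, Ē_{n+1,n+1} = −Σⱼ∂ⱼ. -/
noncomputable def Ebar (n : ℕ) (a b : Fin (n + 1)) :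
    ((Fin n → ℤ) →₀ ℂ) →ₗ[ℂ] ((Fin n → ℤ) →₀ ℂ) :=
  LaurentD (uVec n b) (chiVec n a - chiVec n b)

open Matrix

section LaurentD

variable {n : ℕ}

lemma dotProduct_intCast_add (u : Fin n → ℂ) (r s : Fin n → ℤ) :
    (u ⬝ᵥ fun i => ((r + s) i : ℂ)) = (u ⬝ᵥ fun i => (r i : ℂ)) + u ⬝ᵥ fun i => (s i : ℂ) := by
  simp only [Pi.add_apply, Int.cast_add, dotProduct, mul_add, Finset.sum_add_distrib]

lemma dotProduct_intCast_sub (u : Fin n → ℂ) (r s : Fin n → ℤ) :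
    (u ⬝ᵥ fun i => ((r - s) i : ℂ)) = (u ⬝ᵥ fun i => (r i : ℂ)) - u ⬝ᵥ fun i => (s i : ℂ) := by
  simp only [Pi.sub_apply, Int.cast_sub, dotProduct, mul_sub, Finset.sum_sub_distrib]

lemma LaurentD_single (u : Fin n → ℂ) (r m : Fin n → ℤ) (x : ℂ) :
    LaurentD u r (Finsupp.single m x) = (u ⬝ᵥ fun i => (m i : ℂ)) • Finsupp.single (m + r) x := by
  simp [LaurentD, dotProduct]

lemma LaurentD_commutator (u v : Fin n → ℂ) (r s : Fin n → ℤ) :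
    LaurentD u r ∘ₗ LaurentD v s - LaurentD v s ∘ₗ LaurentD u r
      = LaurentD ((u ⬝ᵥ fun i => (s i : ℂ)) • v - (v ⬝ᵥ fun i => (r i : ℂ)) • u) (s + r) := by
  refine Finsupp.lhom_ext fun m x => ?_
  simp only [LinearMap.sub_apply, LinearMap.comp_apply, LaurentD_single, Finsupp.smul_single,
    smul_eq_mul]
  rw [add_right_comm m s r, ← add_assoc, add_right_comm m s r, ← Finsupp.single_sub]
  congr 1
  simp only [dotProduct_intCast_add, sub_dotProduct, smul_dotProduct, smul_eq_mul]
  ring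

lemma LaurentD_smul_left (c : ℂ) (u : Fin n → ℂ) (r : Fin n → ℤ) :
    LaurentD (c • u) r = c • LaurentD u r :=
  Finsupp.lhom_ext fun m x => by
    simp only [LaurentD_single, LinearMap.smul_apply, smul_dotProduct, smul_smul, smul_eq_mul]

lemma LaurentD_sub_left (u v : Fin n → ℂ) (r : Fin n → ℤ) :
    LaurentD (u - v) r = LaurentD u r - LaurentD v r :=
  Finsupp.lhom_ext fun m x => by
    simp only [LaurentD_single, LinearMap.sub_apply, sub_dotProduct, sub_smul]

end LaurentD

lemma chiVec_last (n : ℕ) : (fun i => (chiVec n (Fin.last n) i : ℂ)) = 0 := by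
  ext i
  simp [chiVec, i.isLt.ne']

lemma chiVec_castSucc (n : ℕ) (j : Fin n) :
    (fun i => (chiVec n j.castSucc i : ℂ)) = Pi.single j 1 := by
  ext i
  simp [chiVec, Pi.single_apply, Fin.val_inj, eq_comm]

lemma uVec_dotProduct_chiVec (n : ℕ) (b c : Fin (n + 1)) :
    (uVec n b ⬝ᵥ fun i => (chiVec n c i : ℂ))
      = (if b = c then 1 else 0) - (if b = Fin.last n then 1 else 0) := by
  induction c using Fin.lastCases with
  | last => simp [chiVec_last]
  | cast j =>
    rw [chiVec_castSucc, dotProduct_single, mul_one]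
    induction b using Fin.lastCases with
    | last => simp [uVec, Fin.ext_iff, j.isLt.ne']
    | cast k => simp [uVec, k.isLt.ne, Fin.val_inj]

lemma uVec_dotProduct_chiVec_sub (n : ℕ) (b c d : Fin (n + 1)) :
    (uVec n b ⬝ᵥ fun i => ((chiVec n c - chiVec n d) i : ℂ))
      = (if b = c then 1 else 0) - (if b = d then 1 else 0) := by
  rw [dotProduct_intCast_sub, uVec_dotProduct_chiVec, uVec_dotProduct_chiVec]
  ring

/-- The gl_{n+1} commutation relations
    [Ē_{ab}, Ē_{cd}] = δ_{bc}Ē_{ad} − δ_{da}Ē_{cb}. -/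
theorem Ebar_gl_relations (n : ℕ) (a b c d : Fin (n + 1)) :
    Ebar n a b ∘ₗ Ebar n c d - Ebar n c d ∘ₗ Ebar n a b
      = (if b = c then (1 : ℂ) else 0) • Ebar n a d
        - (if d = a then (1 : ℂ) else 0) • Ebar n c b := by
  have hcancel : ((if b = c then (1 : ℂ) else 0) - (if b = d then 1 else 0)) • uVec n d
      - ((if d = a then (1 : ℂ) else 0) - (if d = b then 1 else 0)) • uVec n b
      = (if b = c then (1 : ℂ) else 0) • uVec n d - (if d = a then (1 : ℂ) else 0) • uVec n b := by
    by_cases hbd : b = d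
    · subst hbd
      simp only [sub_smul]
      abel
    · simp only [if_neg hbd, if_neg (Ne.symm hbd), sub_zero]
  simp only [Ebar, LaurentD_commutator, uVec_dotProduct_chiVec_sub, hcancel, LaurentD_sub_left,
    LaurentD_smul_left]
  congr 1
  · split_ifs with hbc
    · subst hbc
      congr 2
      abel
    · simp only [zero_smul]
  · split_ifs with hda
    · subst hda
      congr 2
      abel
    · simp only [zero_smul]
end

section
/- If c ± λ ∉ ℤ, then the gl₂-module V with basis {vᵢ : i ∈ ℤ} and action E₁₁vᵢ = (b+λ+i)vᵢ, E₂₂vᵢ = (b−λ−i)vᵢ, E₁₂vᵢ = (c+λ+i)v_{i+1}, E₂₁vᵢ = (c−λ−i)v_{i−1} is an irreducible gl₂-module. -/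
/- V = span{vᵢ : i ∈ ℤ} modeled as ℤ →₀ ℂ with vᵢ = single i 1. -/

noncomputable def E11 (lam b : ℂ) : (ℤ →₀ ℂ) →ₗ[ℂ] (ℤ →₀ ℂ) :=
  Finsupp.lsum ℂ fun i => (b + lam + (i : ℂ)) • Finsupp.lsingle i

noncomputable def E22 (lam b : ℂ) : (ℤ →₀ ℂ) →ₗ[ℂ] (ℤ →₀ ℂ) :=
  Finsupp.lsum ℂ fun i => (b - lam - (i : ℂ)) • Finsupp.lsingle i

noncomputable def E12 (lam c : ℂ) : (ℤ →₀ ℂ) →ₗ[ℂ] (ℤ →₀ ℂ) :=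
  Finsupp.lsum ℂ fun i => (c + lam + (i : ℂ)) • Finsupp.lsingle (i + 1)

noncomputable def E21 (lam c : ℂ) : (ℤ →₀ ℂ) →ₗ[ℂ] (ℤ →₀ ℂ) :=
  Finsupp.lsum ℂ fun i => (c - lam - (i : ℂ)) • Finsupp.lsingle (i - 1)

/-! `E₁₁` acts diagonally on the basis with the pairwise distinct eigenvalues `b + λ + i`, so a
Lagrange interpolation polynomial in `E₁₁` cuts any nonzero vector of an invariant subspace down to
a single basis vector `vᵢ`. As `c ± λ ∉ ℤ`, `E₁₂` and `E₂₁` send each `vⱼ` to a nonzero multiple of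
`v_{j ± 1}`, so from `vᵢ` the subspace reaches every basis vector. -/

open Finsupp Polynomial

section Diagonal

variable {ι K : Type*} [Field K]

noncomputable def diagonalEnd (μ : ι → K) : Module.End K (ι →₀ K) :=
  Finsupp.lsum K fun i => μ i • Finsupp.lsingle i

variable {μ : ι → K}

lemma diagonalEnd_single (i : ι) (a : K) : diagonalEnd μ (single i a) = μ i • single i a := by
  simp [diagonalEnd]

lemma aeval_diagonalEnd_single (p : K[X]) (i : ι) (a : K) :
    aeval (diagonalEnd μ) p (single i a) = p.eval (μ i) • single i a := by
  rcases eq_or_ne a 0 with rfl | ha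
  · simp
  · refine Module.End.aeval_apply_of_hasEigenvector ⟨?_, single_ne_zero.2 ha⟩
    exact Module.End.mem_eigenspace_iff.2 (diagonalEnd_single i a)

lemma aeval_diagonalEnd_apply (p : K[X]) (w : ι →₀ K) (j : ι) :
    aeval (diagonalEnd μ) p w j = p.eval (μ j) * w j := by
  classical
  induction w using Finsupp.induction_linear with
  | zero => simp
  | add f g hf hg => simp [hf, hg, mul_add]
  | single i a =>
    rw [aeval_diagonalEnd_single, Finsupp.smul_apply, smul_eq_mul, single_apply]
    split_ifs with h <;> simp [h]

lemma single_apply_mem_of_diagonalEnd_mem (hμ : Function.Injective μ) {W : Submodule K (ι →₀ K)}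
    (hW : ∀ x ∈ W, diagonalEnd μ x ∈ W) {w : ι →₀ K} (hw : w ∈ W) (i : ι) :
    single i (w i) ∈ W := by
  classical
  by_cases hi : i ∈ w.support
  · convert aeval_apply_smul_mem_of_le_comap hw (Lagrange.basis w.support μ i) _ hW using 1
    ext j
    rw [aeval_diagonalEnd_apply]
    rcases eq_or_ne i j with rfl | hij
    · rw [Lagrange.eval_basis_self hμ.injOn hi, one_mul, single_eq_same]
    · by_cases hj : j ∈ w.support
      · rw [Lagrange.eval_basis_of_ne hij hj, zero_mul, single_eq_of_ne hij.symm]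
      · rw [notMem_support_iff.1 hj, mul_zero, single_eq_of_ne hij.symm]
  · simp [notMem_support_iff.1 hi]

lemma exists_single_one_mem_of_diagonalEnd_mem (hμ : Function.Injective μ)
    {W : Submodule K (ι →₀ K)} (hW : ∀ x ∈ W, diagonalEnd μ x ∈ W) (hW0 : W ≠ ⊥) :
    ∃ i, single i 1 ∈ W := by
  obtain ⟨w, hw, hw0⟩ := W.ne_bot_iff.1 hW0
  obtain ⟨i, hi⟩ := Finsupp.ne_iff.1 hw0
  refine ⟨i, (W.smul_mem_iff hi).1 ?_⟩
  rw [smul_single_one]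
  exact single_apply_mem_of_diagonalEnd_mem hμ hW hw i

end Diagonal

lemma Submodule.eq_top_of_forall_single_one_mem {R ι : Type*} [Semiring R]
    {W : Submodule R (ι →₀ R)} (h : ∀ i, single i 1 ∈ W) : W = ⊤ := by
  rw [eq_top_iff, ← Finsupp.basisSingleOne.span_eq, Submodule.span_le]
  rintro _ ⟨i, rfl⟩
  simpa using h i

section Gl2

variable {lam c : ℂ} {W : Submodule ℂ (ℤ →₀ ℂ)}

lemma E12_single (i : ℤ) (a : ℂ) :
    E12 lam c (single i a) = (c + lam + i) • single (i + 1) a := by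
  simp [E12]

lemma E21_single (i : ℤ) (a : ℂ) :
    E21 lam c (single i a) = (c - lam - i) • single (i - 1) a := by
  simp [E21]

lemma single_add_one_mem (h1 : ∀ m : ℤ, c + lam ≠ m) (hW12 : ∀ x ∈ W, E12 lam c x ∈ W) {j : ℤ}
    (hj : single j (1 : ℂ) ∈ W) : single (j + 1) (1 : ℂ) ∈ W := by
  have hne : c + lam + j ≠ 0 := fun h => h1 (-j) (by push_cast; linear_combination h)
  rw [← W.smul_mem_iff hne, ← E12_single]
  exact hW12 _ hj

lemma single_sub_one_mem (h2 : ∀ m : ℤ, c - lam ≠ m) (hW21 : ∀ x ∈ W, E21 lam c x ∈ W) {j : ℤ}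
    (hj : single j (1 : ℂ) ∈ W) : single (j - 1) (1 : ℂ) ∈ W := by
  have hne : c - lam - j ≠ 0 := fun h => h2 j (by linear_combination h)
  rw [← W.smul_mem_iff hne, ← E21_single]
  exact hW21 _ hj

end Gl2

theorem gl2_module_irreducible_general (lam b c : ℂ)
    (h1 : ∀ m : ℤ, c + lam ≠ (m : ℂ)) (h2 : ∀ m : ℤ, c - lam ≠ (m : ℂ))
    (W : Submodule ℂ (ℤ →₀ ℂ))
    (hW11 : ∀ x ∈ W, E11 lam b x ∈ W)
    (hW12 : ∀ x ∈ W, E12 lam c x ∈ W) (hW21 : ∀ x ∈ W, E21 lam c x ∈ W)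
    (hW : W ≠ ⊥) : W = ⊤ := by
  have hμ : Function.Injective fun i : ℤ => b + lam + i := fun i j h => by simpa using h
  -- `E11 lam b` is `diagonalEnd fun i => b + lam + i` by definition.
  obtain ⟨i₀, hi₀⟩ := exists_single_one_mem_of_diagonalEnd_mem hμ hW11 hW
  refine Submodule.eq_top_of_forall_single_one_mem fun j => ?_
  induction j using Int.inductionOn' (b := i₀) with
  | zero => exact hi₀
  | succ k _ hk => exact single_add_one_mem h1 hW12 hk
  | pred k _ hk => exact single_sub_one_mem h2 hW21 hk

/-- If c ± λ ∉ ℤ then the gl₂-module V is irreducible: every submodule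
    invariant under E₁₁, E₂₂, E₁₂, E₂₁ is 0 or all of V. -/
theorem gl2_module_irreducible (lam b c : ℂ)
    (h1 : ∀ m : ℤ, c + lam ≠ (m : ℂ)) (h2 : ∀ m : ℤ, c - lam ≠ (m : ℂ))
    (W : Submodule ℂ (ℤ →₀ ℂ))
    (hW11 : ∀ x ∈ W, E11 lam b x ∈ W) (hW22 : ∀ x ∈ W, E22 lam b x ∈ W)
    (hW12 : ∀ x ∈ W, E12 lam c x ∈ W) (hW21 : ∀ x ∈ W, E21 lam c x ∈ W)
    (hW : W ≠ ⊥) : W = ⊤ :=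
  gl2_module_irreducible_general lam b c h1 h2 W hW11 hW12 hW21 hW
end

section
/- Let λ,b,c,α₁,α₂ ∈ ℂ satisfy: c±λ, α₁−b−λ, α₂−b+λ, α₁+2b, α₂+2b, α₁+α₂+b±c ∉ ℤ. Then the sl₃-module F^α_{2b}(V) is generated by any single basis vector vᵢ(r₁,r₂), i.e., the submodule generated by vᵢ(r₁,r₂) is all of F^α_{2b}(V). -/
set_option linter.unusedVariables false
/- F^α_{2b}(V) modeled as (ℤ × ℤ × ℤ) →₀ ℂ with basis vᵢ(r₁,r₂) = single (i,r₁,r₂) 1,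
   carrying the sl₃-action of formulas (3.2): parameters α₁, α₂, λ (written lam), b, c. -/

abbrev F3 := (ℤ × ℤ × ℤ) →₀ ℂ

/-- The basis vector vᵢ(r₁,r₂). -/
noncomputable def vb (i r₁ r₂ : ℤ) : F3 := Finsupp.single (i, r₁, r₂) 1

noncomputable def Eb11 (α₁ α₂ lam b c : ℂ) : F3 →ₗ[ℂ] F3 :=
  Finsupp.lsum ℂ fun p => ((p.2.1 : ℂ) + α₁) • Finsupp.lsingle p

noncomputable def Eb22 (α₁ α₂ lam b c : ℂ) : F3 →ₗ[ℂ] F3 :=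
  Finsupp.lsum ℂ fun p => ((p.2.2 : ℂ) + α₂) • Finsupp.lsingle p

noncomputable def Eb33 (α₁ α₂ lam b c : ℂ) : F3 →ₗ[ℂ] F3 :=
  Finsupp.lsum ℂ fun p => (-((p.2.1 : ℂ) + α₁ + (p.2.2 : ℂ) + α₂)) • Finsupp.lsingle p

noncomputable def Eb12 (α₁ α₂ lam b c : ℂ) : F3 →ₗ[ℂ] F3 :=
  Finsupp.lsum ℂ fun p =>
    (lam + (p.1 : ℂ) - b + (p.2.2 : ℂ) + α₂) • Finsupp.lsingle (p.1, p.2.1 + 1, p.2.2 - 1)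
      + (c + lam + (p.1 : ℂ)) • Finsupp.lsingle (p.1 + 1, p.2.1 + 1, p.2.2 - 1)

noncomputable def Eb21 (α₁ α₂ lam b c : ℂ) : F3 →ₗ[ℂ] F3 :=
  Finsupp.lsum ℂ fun p =>
    (c - lam - (p.1 : ℂ)) • Finsupp.lsingle (p.1 - 1, p.2.1 - 1, p.2.2 + 1)
      + (-(lam + (p.1 : ℂ)) - b + (p.2.1 : ℂ) + α₁) • Finsupp.lsingle (p.1, p.2.1 - 1, p.2.2 + 1)

noncomputable def Eb13 (α₁ α₂ lam b c : ℂ) : F3 →ₗ[ℂ] F3 :=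
  Finsupp.lsum ℂ fun p =>
    -(((p.2.1 : ℂ) + α₁ + (p.2.2 : ℂ) + α₂ + b + lam + (p.1 : ℂ)) • Finsupp.lsingle (p.1, p.2.1 + 1, p.2.2)
      + (c + lam + (p.1 : ℂ)) • Finsupp.lsingle (p.1 + 1, p.2.1 + 1, p.2.2))

noncomputable def Eb31 (α₁ α₂ lam b c : ℂ) : F3 →ₗ[ℂ] F3 :=
  Finsupp.lsum ℂ fun p =>
    ((p.2.1 : ℂ) + α₁ - b - lam - (p.1 : ℂ)) • Finsupp.lsingle (p.1, p.2.1 - 1, p.2.2)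

noncomputable def Eb23 (α₁ α₂ lam b c : ℂ) : F3 →ₗ[ℂ] F3 :=
  Finsupp.lsum ℂ fun p =>
    -((c - lam - (p.1 : ℂ)) • Finsupp.lsingle (p.1 - 1, p.2.1, p.2.2 + 1)
      + ((p.2.1 : ℂ) + α₁ + (p.2.2 : ℂ) + α₂ + b - lam - (p.1 : ℂ)) • Finsupp.lsingle (p.1, p.2.1, p.2.2 + 1))

noncomputable def Eb32 (α₁ α₂ lam b c : ℂ) : F3 →ₗ[ℂ] F3 :=
  Finsupp.lsum ℂ fun p =>
    ((p.2.2 : ℂ) + α₂ - b + lam + (p.1 : ℂ)) • Finsupp.lsingle (p.1, p.2.1, p.2.2 - 1)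

/-! The lowering operators `E₃₁`, `E₃₂` send `vᵢ(r₁,r₂)` to a multiple of `vᵢ(r₁-1,r₂)`,
`vᵢ(r₁,r₂-1)`. Every other neighbour is isolated by a combination of two-step words whose
unwanted components cancel: `E₃₁E₁₃` and `E₃₂E₂₃` (corrected by a multiple of `v`) shift `i` by
`±1`, `E₃₁E₂₃ + κ E₂₁` moves to `vᵢ(r₁-1,r₂+1)`, and `E₁₂E₂₃ v` corrected by `E₁₃` on `vᵢ` and
`vᵢ₋₁` gives `vᵢ(r₁+1,r₂)`. The coefficient left over is in each case a product of factors
`parameter + integer`, which the genericity conditions keep nonzero, so one basis vector reaches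
all of its neighbours and hence the whole basis. -/

section Formulas

section Formulas
variable (α₁ α₂ lam b c : ℂ) (j s₁ s₂ : ℤ)

lemma Eb31_vb :
    Eb31 α₁ α₂ lam b c (vb j s₁ s₂) = ((s₁ : ℂ) + α₁ - b - lam - j) • vb j (s₁ - 1) s₂ := by
  simp [Eb31, vb]

lemma Eb32_vb :
    Eb32 α₁ α₂ lam b c (vb j s₁ s₂) = ((s₂ : ℂ) + α₂ - b + lam + j) • vb j s₁ (s₂ - 1) := by
  simp [Eb32, vb]

lemma Eb21_vb :
    Eb21 α₁ α₂ lam b c (vb j s₁ s₂) =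
      (c - lam - j) • vb (j - 1) (s₁ - 1) (s₂ + 1)
        + (-(lam + j) - b + s₁ + α₁) • vb j (s₁ - 1) (s₂ + 1) := by
  simp [Eb21, vb]

lemma Eb12_vb :
    Eb12 α₁ α₂ lam b c (vb j s₁ s₂) =
      (lam + j - b + s₂ + α₂) • vb j (s₁ + 1) (s₂ - 1)
        + (c + lam + j) • vb (j + 1) (s₁ + 1) (s₂ - 1) := by
  simp [Eb12, vb]

lemma Eb13_vb :
    Eb13 α₁ α₂ lam b c (vb j s₁ s₂) =
      -(((s₁ : ℂ) + α₁ + s₂ + α₂ + b + lam + j) • vb j (s₁ + 1) s₂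
        + (c + lam + j) • vb (j + 1) (s₁ + 1) s₂) := by
  simp [Eb13, vb]

lemma Eb23_vb :
    Eb23 α₁ α₂ lam b c (vb j s₁ s₂) =
      -((c - lam - j) • vb (j - 1) s₁ (s₂ + 1)
        + ((s₁ : ℂ) + α₁ + s₂ + α₂ + b - lam - j) • vb j s₁ (s₂ + 1)) := by
  simp [Eb23, vb]

end Formulas

section Moves
variable {α₁ α₂ lam b c : ℂ} {W : Submodule ℂ F3} {j s₁ s₂ : ℤ}

lemma vb_r₁_pred_mem (hW31 : ∀ x ∈ W, Eb31 α₁ α₂ lam b c x ∈ W)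
    (hK : (s₁ : ℂ) + α₁ - b - lam - j ≠ 0) (hv : vb j s₁ s₂ ∈ W) :
    vb j (s₁ - 1) s₂ ∈ W :=
  (W.smul_mem_iff hK).mp (Eb31_vb α₁ α₂ lam b c j s₁ s₂ ▸ hW31 _ hv)

lemma vb_r₂_pred_mem (hW32 : ∀ x ∈ W, Eb32 α₁ α₂ lam b c x ∈ W)
    (hP : (s₂ : ℂ) + α₂ - b + lam + j ≠ 0) (hv : vb j s₁ s₂ ∈ W) :
    vb j s₁ (s₂ - 1) ∈ W :=
  (W.smul_mem_iff hP).mp (Eb32_vb α₁ α₂ lam b c j s₁ s₂ ▸ hW32 _ hv)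

lemma vb_i_succ_mem (hW13 : ∀ x ∈ W, Eb13 α₁ α₂ lam b c x ∈ W)
    (hW31 : ∀ x ∈ W, Eb31 α₁ α₂ lam b c x ∈ W)
    (hc : c + lam + j ≠ 0) (hK : (s₁ : ℂ) + α₁ - b - lam - j ≠ 0) (hv : vb j s₁ s₂ ∈ W) :
    vb (j + 1) s₁ s₂ ∈ W := by
  refine (W.smul_mem_iff (mul_ne_zero hc hK)).mp ?_
  have key : -(Eb31 α₁ α₂ lam b c (Eb13 α₁ α₂ lam b c (vb j s₁ s₂))
      + (((s₁ : ℂ) + α₁ + s₂ + α₂ + b + lam + j) * ((s₁ : ℂ) + 1 + α₁ - b - lam - j))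
        • vb j s₁ s₂) = ((c + lam + j) * ((s₁ : ℂ) + α₁ - b - lam - j)) • vb (j + 1) s₁ s₂ := by
    simp only [Eb13_vb, map_neg, map_add, map_smul, Eb31_vb, add_sub_cancel_right]
    push_cast
    module
  exact key ▸ W.neg_mem (W.add_mem (hW31 _ (hW13 _ hv)) (W.smul_mem _ hv))

lemma vb_i_pred_mem (hW23 : ∀ x ∈ W, Eb23 α₁ α₂ lam b c x ∈ W)
    (hW32 : ∀ x ∈ W, Eb32 α₁ α₂ lam b c x ∈ W)
    (hc : c - lam - j ≠ 0) (hP : (s₂ : ℂ) + α₂ - b + lam + j ≠ 0) (hv : vb j s₁ s₂ ∈ W) :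
    vb (j - 1) s₁ s₂ ∈ W := by
  refine (W.smul_mem_iff (mul_ne_zero hc hP)).mp ?_
  have key : -(Eb32 α₁ α₂ lam b c (Eb23 α₁ α₂ lam b c (vb j s₁ s₂))
      + (((s₁ : ℂ) + α₁ + s₂ + α₂ + b - lam - j) * ((s₂ : ℂ) + 1 + α₂ - b + lam + j))
        • vb j s₁ s₂) = ((c - lam - j) * ((s₂ : ℂ) + α₂ - b + lam + j)) • vb (j - 1) s₁ s₂ := by
    simp only [Eb23_vb, map_neg, map_add, map_smul, Eb32_vb, add_sub_cancel_right]
    push_cast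
    module
  exact key ▸ W.neg_mem (W.add_mem (hW32 _ (hW23 _ hv)) (W.smul_mem _ hv))

lemma vb_r₁_pred_r₂_succ_mem (hW21 : ∀ x ∈ W, Eb21 α₁ α₂ lam b c x ∈ W)
    (hW23 : ∀ x ∈ W, Eb23 α₁ α₂ lam b c x ∈ W) (hW31 : ∀ x ∈ W, Eb31 α₁ α₂ lam b c x ∈ W)
    (hK : (s₁ : ℂ) + α₁ - b - lam - j ≠ 0) (hG : (s₂ : ℂ) + α₂ + 2 * b - 1 ≠ 0)
    (hv : vb j s₁ s₂ ∈ W) : vb j (s₁ - 1) (s₂ + 1) ∈ W := by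
  refine (W.smul_mem_iff (mul_ne_zero hK hG)).mp ?_
  have key : -(Eb31 α₁ α₂ lam b c (Eb23 α₁ α₂ lam b c (vb j s₁ s₂))
      + ((s₁ : ℂ) + α₁ - b - lam - j + 1) • Eb21 α₁ α₂ lam b c (vb j s₁ s₂))
      = (((s₁ : ℂ) + α₁ - b - lam - j) * ((s₂ : ℂ) + α₂ + 2 * b - 1))
        • vb j (s₁ - 1) (s₂ + 1) := by
    simp only [Eb23_vb, Eb21_vb, map_neg, map_add, map_smul, Eb31_vb]
    push_cast
    module
  exact key ▸ W.neg_mem (W.add_mem (hW31 _ (hW23 _ hv)) (W.smul_mem _ (hW21 _ hv)))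

lemma vb_r₁_succ_mem (hW12 : ∀ x ∈ W, Eb12 α₁ α₂ lam b c x ∈ W)
    (hW13 : ∀ x ∈ W, Eb13 α₁ α₂ lam b c x ∈ W) (hW23 : ∀ x ∈ W, Eb23 α₁ α₂ lam b c x ∈ W)
    (hG : (s₁ : ℂ) + α₁ + 2 * b - 1 ≠ 0) (hS_add : (s₁ : ℂ) + s₂ + α₁ + α₂ + b + c - 1 ≠ 0)
    (hS_sub : (s₁ : ℂ) + s₂ + α₁ + α₂ + b - c ≠ 0)
    (hv : vb j s₁ s₂ ∈ W) (hv' : vb (j - 1) s₁ s₂ ∈ W) : vb j (s₁ + 1) s₂ ∈ W := by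
  set s : ℂ := (s₁ : ℂ) + s₂ + α₁ + α₂ + b
  refine (W.smul_mem_iff (mul_ne_zero (mul_ne_zero hG hS_add) hS_sub)).mp ?_
  have key : (s + lam + j - 1) • Eb12 α₁ α₂ lam b c (Eb23 α₁ α₂ lam b c (vb j s₁ s₂))
      + (-(c - lam - j) * ((s₂ : ℂ) + α₂ - b + lam + j)) • Eb13 α₁ α₂ lam b c (vb (j - 1) s₁ s₂)
      + (-(s - lam - j) * (s + lam + j - 1)) • Eb13 α₁ α₂ lam b c (vb j s₁ s₂)
      = (((s₁ : ℂ) + α₁ + 2 * b - 1) * (s + c - 1) * (s - c)) • vb j (s₁ + 1) s₂ := by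
    simp only [Eb23_vb, Eb13_vb, map_neg, map_add, map_smul, Eb12_vb, sub_add_cancel,
      add_sub_cancel_right]
    unfold s
    push_cast
    module
  exact key ▸ W.add_mem (W.add_mem (W.smul_mem _ (hW12 _ (hW23 _ hv)))
    (W.smul_mem _ (hW13 _ hv'))) (W.smul_mem _ (hW13 _ hv))

end Moves

lemma ne_zero_of_eq_add_intCast {R : Type*} [CommRing R] {z w : R} (hz : ∀ m : ℤ, z ≠ m)
    (k : ℤ) (hw : w = z + k) : w ≠ 0 :=
  fun h => hz (-k) (by push_cast; linear_combination h - hw)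

lemma forall_of_shift_closed {P : ℤ → ℤ → ℤ → Prop}
    (hi_succ : ∀ j s₁ s₂, P j s₁ s₂ → P (j + 1) s₁ s₂)
    (hi_pred : ∀ j s₁ s₂, P j s₁ s₂ → P (j - 1) s₁ s₂)
    (hr₁_succ : ∀ j s₁ s₂, P j s₁ s₂ → P j (s₁ + 1) s₂)
    (hr₁_pred : ∀ j s₁ s₂, P j s₁ s₂ → P j (s₁ - 1) s₂)
    (hr₂_succ : ∀ j s₁ s₂, P j s₁ s₂ → P j s₁ (s₂ + 1))
    (hr₂_pred : ∀ j s₁ s₂, P j s₁ s₂ → P j s₁ (s₂ - 1))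
    {i r₁ r₂ : ℤ} (h : P i r₁ r₂) (j s₁ s₂ : ℤ) : P j s₁ s₂ := by
  have hj : P j r₁ r₂ :=
    Int.inductionOn' j i h (fun k _ => hi_succ k r₁ r₂) (fun k _ => hi_pred k r₁ r₂)
  have hs₁ : P j s₁ r₂ :=
    Int.inductionOn' s₁ r₁ hj (fun k _ => hr₁_succ j k r₂) (fun k _ => hr₁_pred j k r₂)
  exact Int.inductionOn' s₂ r₂ hs₁ (fun k _ => hr₂_succ j s₁ k) (fun k _ => hr₂_pred j s₁ k)

lemma eq_top_of_forall_vb_mem {W : Submodule ℂ F3} (h : ∀ j s₁ s₂, vb j s₁ s₂ ∈ W) : W = ⊤ := by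
  rw [eq_top_iff, ← (Finsupp.basisSingleOne (R := ℂ) (ι := ℤ × ℤ × ℤ)).span_eq,
    Submodule.span_le]
  rintro _ ⟨⟨j, s₁, s₂⟩, rfl⟩
  exact h j s₁ s₂

theorem generated_by_any_basis_vector_general (α₁ α₂ lam b c : ℂ)
    (h1 : ∀ m : ℤ, c + lam ≠ (m : ℂ)) (h2 : ∀ m : ℤ, c - lam ≠ (m : ℂ))
    (h3 : ∀ m : ℤ, α₁ - b - lam ≠ (m : ℂ)) (h4 : ∀ m : ℤ, α₂ - b + lam ≠ (m : ℂ))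
    (h5 : ∀ m : ℤ, α₁ + 2 * b ≠ (m : ℂ)) (h6 : ∀ m : ℤ, α₂ + 2 * b ≠ (m : ℂ))
    (h7 : ∀ m : ℤ, α₁ + α₂ + b + c ≠ (m : ℂ)) (h8 : ∀ m : ℤ, α₁ + α₂ + b - c ≠ (m : ℂ))
    (i r₁ r₂ : ℤ) (W : Submodule ℂ F3)
    (hW12 : ∀ x ∈ W, Eb12 α₁ α₂ lam b c x ∈ W)
    (hW21 : ∀ x ∈ W, Eb21 α₁ α₂ lam b c x ∈ W) (hW13 : ∀ x ∈ W, Eb13 α₁ α₂ lam b c x ∈ W)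
    (hW31 : ∀ x ∈ W, Eb31 α₁ α₂ lam b c x ∈ W) (hW23 : ∀ x ∈ W, Eb23 α₁ α₂ lam b c x ∈ W)
    (hW32 : ∀ x ∈ W, Eb32 α₁ α₂ lam b c x ∈ W)
    (hv : vb i r₁ r₂ ∈ W) : W = ⊤ := by
  have hK (j s₁ : ℤ) : (s₁ : ℂ) + α₁ - b - lam - j ≠ 0 :=
    ne_zero_of_eq_add_intCast h3 (s₁ - j) (by push_cast; ring)
  have hP (j s₂ : ℤ) : (s₂ : ℂ) + α₂ - b + lam + j ≠ 0 :=
    ne_zero_of_eq_add_intCast h4 (s₂ + j) (by push_cast; ring)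
  have hi_pred (j s₁ s₂ : ℤ) : vb j s₁ s₂ ∈ W → vb (j - 1) s₁ s₂ ∈ W :=
    vb_i_pred_mem hW23 hW32 (ne_zero_of_eq_add_intCast h2 (-j) (by push_cast; ring)) (hP j s₂)
  have hr₁_succ (j s₁ s₂ : ℤ) (hw : vb j s₁ s₂ ∈ W) : vb j (s₁ + 1) s₂ ∈ W :=
    vb_r₁_succ_mem hW12 hW13 hW23
      (ne_zero_of_eq_add_intCast h5 (s₁ - 1) (by push_cast; ring))
      (ne_zero_of_eq_add_intCast h7 (s₁ + s₂ - 1) (by push_cast; ring))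
      (ne_zero_of_eq_add_intCast h8 (s₁ + s₂) (by push_cast; ring)) hw (hi_pred j s₁ s₂ hw)
  refine eq_top_of_forall_vb_mem (forall_of_shift_closed ?_ hi_pred hr₁_succ ?_ ?_ ?_ hv)
  · exact fun j s₁ s₂ => vb_i_succ_mem hW13 hW31 (ne_zero_of_eq_add_intCast h1 j rfl) (hK j s₁)
  · exact fun j s₁ s₂ => vb_r₁_pred_mem hW31 (hK j s₁)
  · intro j s₁ s₂ hw
    have := vb_r₁_pred_r₂_succ_mem hW21 hW23 hW31 (hK j (s₁ + 1))
      (ne_zero_of_eq_add_intCast h6 (s₂ - 1) (by push_cast; ring)) (hr₁_succ j s₁ s₂ hw)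
    rwa [add_sub_cancel_right] at this
  · exact fun j s₁ s₂ => vb_r₂_pred_mem hW32 (hP j s₂)

/-- Under the genericity conditions of Lemma 2.2, the sl₃-module F^α_{2b}(V) is generated
    by any single basis vector vᵢ(r₁,r₂): any sl₃-invariant subspace containing vᵢ(r₁,r₂)
    is everything. -/
theorem generated_by_any_basis_vector (α₁ α₂ lam b c : ℂ)
    (h1 : ∀ m : ℤ, c + lam ≠ (m : ℂ)) (h2 : ∀ m : ℤ, c - lam ≠ (m : ℂ))
    (h3 : ∀ m : ℤ, α₁ - b - lam ≠ (m : ℂ)) (h4 : ∀ m : ℤ, α₂ - b + lam ≠ (m : ℂ))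
    (h5 : ∀ m : ℤ, α₁ + 2 * b ≠ (m : ℂ)) (h6 : ∀ m : ℤ, α₂ + 2 * b ≠ (m : ℂ))
    (h7 : ∀ m : ℤ, α₁ + α₂ + b + c ≠ (m : ℂ)) (h8 : ∀ m : ℤ, α₁ + α₂ + b - c ≠ (m : ℂ))
    (i r₁ r₂ : ℤ) (W : Submodule ℂ F3)
    (hW11 : ∀ x ∈ W, Eb11 α₁ α₂ lam b c x ∈ W) (hW22 : ∀ x ∈ W, Eb22 α₁ α₂ lam b c x ∈ W)
    (hW33 : ∀ x ∈ W, Eb33 α₁ α₂ lam b c x ∈ W) (hW12 : ∀ x ∈ W, Eb12 α₁ α₂ lam b c x ∈ W)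
    (hW21 : ∀ x ∈ W, Eb21 α₁ α₂ lam b c x ∈ W) (hW13 : ∀ x ∈ W, Eb13 α₁ α₂ lam b c x ∈ W)
    (hW31 : ∀ x ∈ W, Eb31 α₁ α₂ lam b c x ∈ W) (hW23 : ∀ x ∈ W, Eb23 α₁ α₂ lam b c x ∈ W)
    (hW32 : ∀ x ∈ W, Eb32 α₁ α₂ lam b c x ∈ W)
    (hv : vb i r₁ r₂ ∈ W) : W = ⊤ :=
  generated_by_any_basis_vector_general α₁ α₂ lam b c h1 h2 h3 h4 h5 h6 h7 h8 i r₁ r₂ W hW12 hW21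
    hW13 hW31 hW23 hW32 hv
end Formulas
end

section
/- In F^α_{2b}(V), the operator identity ((r₂'−b+i''+s)Ē₁₂ + Ē₁₃Ē₃₂) w_i(r₁,r₂) = (r₂'−b+i'')(s+1−2b−r₁') w_i(r₁+1,r₂−1) holds, where w_i(r₁,r₂) = Σ_{j=0}^s a_{ij}(r₁,r₂)v_{i+j}(r₁,r₂), if and only if for j=1,…,s the coefficients satisfy a_{i,j−1}(r₁,r₂) = (r₂'−b+i''+j)·j·(s+2−3b−i''−j) / ((r₁'−b−i''−j+1)(s+1−j)(c+i''+j−1)) · a_{ij}(r₁,r₂), given the shift recursions in r₁ and r₂ hold. -/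
set_option linter.unusedVariables false
/-! The operator sends `v_k(r₁,r₂)` to a combination of `v_k` and `v_{k+1}` at `(r₁+1,r₂-1)`, and
the coefficient of `v_{i+s+1}` vanishes because of the choice `r₂'-b+i''+s` of the scalar. So both
sides of the identity are combinations of the independent vectors `v_{i+j}(r₁+1,r₂-1)`,
`0 ≤ j ≤ s`, and comparing coefficients gives a relation between `a_{i,j-1}(r₁,r₂)`,
`a_{ij}(r₁,r₂)` and `a_{ij}(r₁+1,r₂-1)`. The shift recursions express the last one through
`a_{ij}(r₁,r₂)`, and the relation becomes the stated recursion; for `j = 0` it holds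
automatically, since the shift recursions make `a_{i0}` invariant under
`(r₁,r₂) ↦ (r₁+1,r₂-1)`. -/

theorem sum_range_succ_comp_succ_of_eq_zero {M : Type*} [AddCommMonoid M] (n : ℕ) (f : ℕ → M)
    (hf : f (n + 1) = 0) :
    ∑ j ∈ Finset.range (n + 1), f (j + 1)
      = ∑ j ∈ Finset.range (n + 1), if j = 0 then 0 else f j := by
  rw [Finset.sum_range_succ, hf, add_zero, Finset.sum_range_succ', if_pos rfl, add_zero]
  exact Finset.sum_congr rfl fun j _ => (if_neg j.succ_ne_zero).symm

theorem two_term_relation_iff_eq_div_mul {K : Type*} [Field K] {B D P N C j e e' z : K} (A : K)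
    (hP : P - j + 1 ≠ 0) (hN : N ≠ 0) (hC : C ≠ 0) (hD : B + P + 1 = D)
    (hz : z * (A * (P - j + 1)) = e * ((A + j) * (P + 1))) :
    e * ((A + j) * (B - j)) + e' * (N * C) = A * B * z
      ↔ e' = (A + j) * j * (D - j) / ((P - j + 1) * N * C) * e := by
  subst hD
  -- after `hz`, this is `B (P + 1) - (B - j) (P - j + 1) = j (B + P + 1 - j)`
  rw [div_mul_eq_mul_div, eq_div_iff (mul_ne_zero (mul_ne_zero hP hN) hC), ← mul_left_inj' hP]
  constructor <;> intro h
  · linear_combination h + B * hz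
  · linear_combination h - B * hz

theorem sum_smul_vb_apply (n : ℕ) (e : ℕ → ℂ) (i r₁ r₂ : ℤ) {j : ℕ} (hj : j < n) :
    (∑ l ∈ Finset.range n, e l • vb (i + l) r₁ r₂) (i + j, r₁, r₂) = e j := by
  simp [vb, Finsupp.finsetSum_apply, Finsupp.single_apply, hj]

theorem sum_smul_vb_eq_sum_smul_vb_iff (n : ℕ) (e d : ℕ → ℂ) (i r₁ r₂ : ℤ) :
    ∑ j ∈ Finset.range n, e j • vb (i + j) r₁ r₂ = ∑ j ∈ Finset.range n, d j • vb (i + j) r₁ r₂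
      ↔ ∀ j ∈ Finset.range n, e j = d j := by
  refine ⟨fun h j hj => ?_, fun h => Finset.sum_congr rfl fun j hj => by rw [h j hj]⟩
  have hj' := Finset.mem_range.mp hj
  rw [← sum_smul_vb_apply n e i r₁ r₂ hj', h, sum_smul_vb_apply n d i r₁ r₂ hj']

section

variable (α₁ α₂ lam b c : ℂ)

theorem smul_Eb12_add_Eb13_comp_Eb32_apply_vb (W : ℂ) (k r₁ r₂ : ℤ) :
    (W • Eb12 α₁ α₂ lam b c + Eb13 α₁ α₂ lam b c ∘ₗ Eb32 α₁ α₂ lam b c) (vb k r₁ r₂)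
      = (((r₂ : ℂ) + α₂ - b + lam + k) * (W - ((r₁ : ℂ) + α₁ + (r₂ : ℂ) - 1 + α₂ + b + lam + k)))
          • vb k (r₁ + 1) (r₂ - 1)
        + ((W - ((r₂ : ℂ) + α₂ - b + lam + k)) * (c + lam + k)) • vb (k + 1) (r₁ + 1) (r₂ - 1) := by
  simp only [Eb12, Eb13, Eb32, vb, LinearMap.add_apply, LinearMap.smul_apply, LinearMap.comp_apply,
    Finsupp.lsum_single, Finsupp.lsingle_apply, map_smul, LinearMap.neg_apply]
  match_scalars <;> ring

theorem smul_Eb12_add_Eb13_comp_Eb32_apply_sum (i r₁ r₂ : ℤ) (s : ℕ) (e : ℕ → ℂ) :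
    (((r₂ : ℂ) + α₂ - b + lam + i + s) • Eb12 α₁ α₂ lam b c
        + Eb13 α₁ α₂ lam b c ∘ₗ Eb32 α₁ α₂ lam b c)
        (∑ j ∈ Finset.range (s + 1), e j • vb (i + j) r₁ r₂)
      = ∑ j ∈ Finset.range (s + 1),
          (e j * (((r₂ : ℂ) + α₂ - b + lam + i + j) * ((s : ℂ) + 1 - 2 * b - ((r₁ : ℂ) + α₁) - j))
            + if j = 0 then 0 else e (j - 1) * (((s : ℂ) + 1 - j) * (c + lam + i + j - 1)))
            • vb (i + j) (r₁ + 1) (r₂ - 1) := by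
  set f : ℕ → F3 := fun j =>
    (e (j - 1) * (((s : ℂ) + 1 - j) * (c + lam + i + j - 1))) • vb (i + j) (r₁ + 1) (r₂ - 1)
  have hterm : ∀ j : ℕ,
      (((r₂ : ℂ) + α₂ - b + lam + i + s) • Eb12 α₁ α₂ lam b c
          + Eb13 α₁ α₂ lam b c ∘ₗ Eb32 α₁ α₂ lam b c) (e j • vb (i + j) r₁ r₂)
        = (e j * (((r₂ : ℂ) + α₂ - b + lam + i + j) * ((s : ℂ) + 1 - 2 * b - ((r₁ : ℂ) + α₁) - j)))
            • vb (i + j) (r₁ + 1) (r₂ - 1) + f (j + 1) := by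
    intro j
    rw [map_smul, smul_Eb12_add_Eb13_comp_Eb32_apply_vb, smul_add, smul_smul, smul_smul]
    simp only [f, Nat.add_sub_cancel, Nat.cast_add, Nat.cast_one, ← add_assoc]
    congr 2 <;> push_cast <;> ring
  have hlast : f (s + 1) = 0 := by simp [f]
  rw [map_sum, Finset.sum_congr rfl fun j _ => hterm j, Finset.sum_add_distrib,
    sum_range_succ_comp_succ_of_eq_zero s f hlast, ← Finset.sum_add_distrib]
  refine Finset.sum_congr rfl fun j _ => ?_
  split_ifs <;> simp [f, add_smul]

theorem shift_recursions_apply_add_one_sub_one (i : ℤ) (f : ℤ → ℤ → ℂ) (j : ℂ)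
    {r₁ r₂ : ℤ} (hP : (r₁ : ℂ) + α₁ - b - lam - i + 1 ≠ 0) (hQ : (r₂ : ℂ) + α₂ - b + lam + i ≠ 0)
    (h₁ : ∀ r₁ r₂ : ℤ, f (r₁ - 1) r₂ =
      (((r₁ : ℂ) + α₁ - b - lam - i - j) / ((r₁ : ℂ) + α₁ - b - lam - i)) * f r₁ r₂)
    (h₂ : ∀ r₁ r₂ : ℤ, f r₁ (r₂ - 1) =
      (((r₂ : ℂ) + α₂ - b + lam + i + j) / ((r₂ : ℂ) + α₂ - b + lam + i)) * f r₁ r₂) :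
    f (r₁ + 1) (r₂ - 1) * (((r₂ : ℂ) + α₂ - b + lam + i) * ((r₁ : ℂ) + α₁ - b - lam - i - j + 1))
      = f r₁ r₂ * (((r₂ : ℂ) + α₂ - b + lam + i + j) * ((r₁ : ℂ) + α₁ - b - lam - i + 1)) := by
  have hback := h₁ (r₁ + 1) r₂
  rw [add_sub_cancel_right] at hback
  push_cast at hback
  have hP' : (r₁ : ℂ) + 1 + α₁ - b - lam - i ≠ 0 := fun h => hP (by linear_combination h)
  rw [h₂, hback]
  field_simp
  ring

theorem operator_identity_iff_coefficient_recursion_at (i : ℤ) (s : ℕ) (a : ℕ → ℤ → ℤ → ℂ)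
    (r₁ r₂ : ℤ) (hA : (r₂ : ℂ) + α₂ - b + lam + i ≠ 0)
    (hP : ∀ j : ℕ, (r₁ : ℂ) + α₁ - b - lam - i - j + 1 ≠ 0)
    (hC : ∀ j : ℕ, c + lam + i + j - 1 ≠ 0)
    (hshift : ∀ j ≤ s, a j (r₁ + 1) (r₂ - 1)
        * (((r₂ : ℂ) + α₂ - b + lam + i) * ((r₁ : ℂ) + α₁ - b - lam - i - j + 1))
      = a j r₁ r₂ * (((r₂ : ℂ) + α₂ - b + lam + i + j) * ((r₁ : ℂ) + α₁ - b - lam - i + 1))) :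
    (((r₂ : ℂ) + α₂ - b + lam + i + s) • Eb12 α₁ α₂ lam b c
        + Eb13 α₁ α₂ lam b c ∘ₗ Eb32 α₁ α₂ lam b c)
        (∑ j ∈ Finset.range (s + 1), a j r₁ r₂ • vb (i + j) r₁ r₂)
      = (((r₂ : ℂ) + α₂ - b + lam + i) * ((s : ℂ) + 1 - 2 * b - ((r₁ : ℂ) + α₁))) •
          ∑ j ∈ Finset.range (s + 1), a j (r₁ + 1) (r₂ - 1) • vb (i + j) (r₁ + 1) (r₂ - 1)
    ↔ ∀ j : ℕ, 1 ≤ j → j ≤ s →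
        a (j - 1) r₁ r₂ =
          ((r₂ + α₂ - b + lam + i + j) * j * (s + 2 - 3 * b - lam - i - j)) /
            ((r₁ + α₁ - b - lam - i - j + 1) * (s + 1 - j) * (c + lam + i + j - 1))
          * a j r₁ r₂ := by
  have hcoeff : ∀ j ≤ s,
      a j r₁ r₂ * (((r₂ : ℂ) + α₂ - b + lam + i + j) * ((s : ℂ) + 1 - 2 * b - ((r₁ : ℂ) + α₁) - j))
          + (if j = 0 then 0 else a (j - 1) r₁ r₂ * (((s : ℂ) + 1 - j) * (c + lam + i + j - 1)))
        = ((r₂ : ℂ) + α₂ - b + lam + i) * ((s : ℂ) + 1 - 2 * b - ((r₁ : ℂ) + α₁))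
            * a j (r₁ + 1) (r₂ - 1)
      ↔ (1 ≤ j → a (j - 1) r₁ r₂ =
          ((r₂ + α₂ - b + lam + i + j) * j * (s + 2 - 3 * b - lam - i - j)) /
            ((r₁ + α₁ - b - lam - i - j + 1) * (s + 1 - j) * (c + lam + i + j - 1))
          * a j r₁ r₂) := by
    intro j hj
    rcases Nat.eq_zero_or_pos j with rfl | hj₁
    · have h := hshift 0 hj
      simp only [Nat.cast_zero, sub_zero, add_zero] at h
      rw [mul_right_cancel₀ (mul_ne_zero hA (by simpa using hP 0)) h]
      refine iff_of_true ?_ fun h₀ => absurd h₀ (by omega)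
      simp only [if_pos, Nat.cast_zero, sub_zero, add_zero]
      ring
    · have hN : (s : ℂ) + 1 - j ≠ 0 := by
        rw [← Nat.cast_succ, sub_ne_zero]
        exact_mod_cast (by omega : s + 1 ≠ j)
      rw [if_neg hj₁.ne', two_term_relation_iff_eq_div_mul (D := (s : ℂ) + 2 - 3 * b - lam - i) _
        (hP j) hN (hC j) (by ring) (hshift j hj)]
      exact ⟨fun h _ => h, fun h => h hj₁⟩
  rw [smul_Eb12_add_Eb13_comp_Eb32_apply_sum, Finset.smul_sum]
  simp only [smul_smul]
  rw [sum_smul_vb_eq_sum_smul_vb_iff]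
  refine ⟨fun h j hj₁ hj => (hcoeff j hj).1 (h j (Finset.mem_range.2 (by omega))) hj₁,
    fun h j hj => (hcoeff j (Finset.mem_range_succ_iff.1 hj)).2 fun hj₁ => h j hj₁ ?_⟩
  exact Finset.mem_range_succ_iff.1 hj

end

theorem operator_identity_iff_coefficient_recursion_general (α₁ α₂ lam b c : ℂ) (i : ℤ)
    (hgen1 : ∀ m : ℤ, α₁ - b - lam ≠ (m : ℂ)) (hgen2 : ∀ m : ℤ, α₂ - b + lam ≠ (m : ℂ))
    (hgen3 : ∀ m : ℤ, c + lam ≠ (m : ℂ))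
    (s : ℕ) (a : ℕ → ℤ → ℤ → ℂ)
    (hrec1 : ∀ j ≤ s, ∀ r₁ r₂ : ℤ, a j (r₁ - 1) r₂ =
      (((r₁ : ℂ) + α₁ - b - lam - (i : ℂ) - (j : ℂ)) / ((r₁ : ℂ) + α₁ - b - lam - (i : ℂ)))
        * a j r₁ r₂)
    (hrec2 : ∀ j ≤ s, ∀ r₁ r₂ : ℤ, a j r₁ (r₂ - 1) =
      (((r₂ : ℂ) + α₂ - b + lam + (i : ℂ) + (j : ℂ)) / ((r₂ : ℂ) + α₂ - b + lam + (i : ℂ)))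
        * a j r₁ r₂) :
    (∀ r₁ r₂ : ℤ,
      (((r₂ : ℂ) + α₂ - b + lam + (i : ℂ) + (s : ℂ)) • Eb12 α₁ α₂ lam b c
          + Eb13 α₁ α₂ lam b c ∘ₗ Eb32 α₁ α₂ lam b c)
        (∑ j ∈ Finset.range (s + 1), a j r₁ r₂ • vb (i + (j : ℤ)) r₁ r₂)
      = (((r₂ : ℂ) + α₂ - b + lam + (i : ℂ)) * ((s : ℂ) + 1 - 2 * b - ((r₁ : ℂ) + α₁))) •
          (∑ j ∈ Finset.range (s + 1), a j (r₁ + 1) (r₂ - 1) • vb (i + (j : ℤ)) (r₁ + 1) (r₂ - 1)))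
    ↔ (∀ j : ℕ, 1 ≤ j → j ≤ s → ∀ r₁ r₂ : ℤ,
        a (j - 1) r₁ r₂ =
          (((r₂ : ℂ) + α₂ - b + lam + (i : ℂ) + (j : ℂ)) * (j : ℂ)
              * ((s : ℂ) + 2 - 3 * b - lam - (i : ℂ) - (j : ℂ))) /
            ((((r₁ : ℂ) + α₁ - b - lam - (i : ℂ) - (j : ℂ) + 1)) * ((s : ℂ) + 1 - (j : ℂ))
              * (c + lam + (i : ℂ) + (j : ℂ) - 1))
          * a j r₁ r₂) := by
  have hA : ∀ r₂ : ℤ, (r₂ : ℂ) + α₂ - b + lam + i ≠ 0 := fun r₂ h =>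
    hgen2 (-(r₂ + i)) (by push_cast; linear_combination h)
  have hP : ∀ (r₁ : ℤ) (j : ℕ), (r₁ : ℂ) + α₁ - b - lam - i - j + 1 ≠ 0 := fun r₁ j h =>
    hgen1 (-(r₁ - i - j + 1)) (by push_cast; linear_combination h)
  have hC : ∀ j : ℕ, c + lam + i + j - 1 ≠ 0 := fun j h =>
    hgen3 (-(i + j - 1)) (by push_cast; linear_combination h)
  have hpoint := fun r₁ r₂ => operator_identity_iff_coefficient_recursion_at α₁ α₂ lam b c i s a
    r₁ r₂ (hA r₂) (hP r₁) hC fun j hj => shift_recursions_apply_add_one_sub_one α₁ α₂ lam b i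
      (a j) j (by simpa using hP r₁ 0) (hA r₂) (hrec1 j hj) (hrec2 j hj)
  exact (forall₂_congr hpoint).trans
    ⟨fun h j h₁ hj r₁ r₂ => h r₁ r₂ j h₁ hj, fun h r₁ r₂ j h₁ hj => h j h₁ hj r₁ r₂⟩

/-- The operator identity ((r₂'−b+i''+s)Ē₁₂ + Ē₁₃Ē₃₂) wᵢ(r₁,r₂)
    = (r₂'−b+i'')(s+1−2b−r₁') wᵢ(r₁+1,r₂−1) holds (for all r₁, r₂) if and only if the
    coefficients satisfy
    a_{i,j−1} = (r₂'−b+i''+j)·j·(s+2−3b−i''−j)/((r₁'−b−i''−j+1)(s+1−j)(c+i''+j−1)) · a_{ij}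
    for j = 1,…,s, given the shift recursions in r₁ and r₂. -/
theorem operator_identity_iff_coefficient_recursion (α₁ α₂ lam b c : ℂ) (i : ℤ)
    (hgen1 : ∀ m : ℤ, α₁ - b - lam ≠ (m : ℂ)) (hgen2 : ∀ m : ℤ, α₂ - b + lam ≠ (m : ℂ))
    (hgen3 : ∀ m : ℤ, c + lam ≠ (m : ℂ))
    (s : ℕ) (hs : 1 ≤ s) (a : ℕ → ℤ → ℤ → ℂ)
    (ha0 : ∀ r₁ r₂ : ℤ, a 0 r₁ r₂ = 1)
    (hrec1 : ∀ j ≤ s, ∀ r₁ r₂ : ℤ, a j (r₁ - 1) r₂ =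
      (((r₁ : ℂ) + α₁ - b - lam - (i : ℂ) - (j : ℂ)) / ((r₁ : ℂ) + α₁ - b - lam - (i : ℂ)))
        * a j r₁ r₂)
    (hrec2 : ∀ j ≤ s, ∀ r₁ r₂ : ℤ, a j r₁ (r₂ - 1) =
      (((r₂ : ℂ) + α₂ - b + lam + (i : ℂ) + (j : ℂ)) / ((r₂ : ℂ) + α₂ - b + lam + (i : ℂ)))
        * a j r₁ r₂) :
    (∀ r₁ r₂ : ℤ,
      (((r₂ : ℂ) + α₂ - b + lam + (i : ℂ) + (s : ℂ)) • Eb12 α₁ α₂ lam b c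
          + Eb13 α₁ α₂ lam b c ∘ₗ Eb32 α₁ α₂ lam b c)
        (∑ j ∈ Finset.range (s + 1), a j r₁ r₂ • vb (i + (j : ℤ)) r₁ r₂)
      = (((r₂ : ℂ) + α₂ - b + lam + (i : ℂ)) * ((s : ℂ) + 1 - 2 * b - ((r₁ : ℂ) + α₁))) •
          (∑ j ∈ Finset.range (s + 1), a j (r₁ + 1) (r₂ - 1) • vb (i + (j : ℤ)) (r₁ + 1) (r₂ - 1)))
    ↔ (∀ j : ℕ, 1 ≤ j → j ≤ s → ∀ r₁ r₂ : ℤ,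
        a (j - 1) r₁ r₂ =
          (((r₂ : ℂ) + α₂ - b + lam + (i : ℂ) + (j : ℂ)) * (j : ℂ)
              * ((s : ℂ) + 2 - 3 * b - lam - (i : ℂ) - (j : ℂ))) /
            ((((r₁ : ℂ) + α₁ - b - lam - (i : ℂ) - (j : ℂ) + 1)) * ((s : ℂ) + 1 - (j : ℂ))
              * (c + lam + (i : ℂ) + (j : ℂ) - 1))
          * a j r₁ r₂) :=
  operator_identity_iff_coefficient_recursion_general α₁ α₂ lam b c i hgen1 hgen2 hgen3 s a hrec1
    hrec2
end

section
/- In the sl₃-module F^α_{2b}(V) with generic parameters (all of c±λ, α₁−b−λ, α₂−b+λ, α₁+2b, α₂+2b, α₁+α₂+b±c, c±3b not integers), none of the operators Ē₁₂Ē₂₁, Ē₂₃Ē₃₂, Ē₁₃Ē₃₁ has an eigenvector; in particular, for any nonzero v = Σ finite c_i v_i(r₁,r₂) in a fixed weight space, Ē₁₂Ē₂₁ v is not a scalar multiple of v. -/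
/-!
Give vᵢ(r₁,r₂) the height i (the height -i for Ē₂₃Ē₃₂). Each of the three operators raises
the height by at most one, and the part of height one higher of the image of vᵢ(r₁,r₂) is a
multiple of the single vector v_{i±1}(r₁,r₂), with a coefficient such as
(r₁+α₁-λ-i-b)(c+λ+i) that the genericity assumptions keep nonzero. If T x = μ x with x ≠ 0,
look at a basis vector of maximal height in x: the coefficient of T x at its successor is
nonzero, while that of μ x is zero.
-/

set_option linter.unusedVariables false
namespace Finsupp

variable {ι R : Type*} [Semiring R]
  (T : (ι →₀ R) →ₗ[R] ι →₀ R) (height : ι → ℤ) (shift : ι → ι)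

theorem apply_shift_eq_of_height_le (hshift : shift.Injective)
    (hheight : ∀ p, height (shift p) = height p + 1)
    (hsupp : ∀ p, ∀ q ∈ (T (single p 1)).support, height q ≤ height p ∨ q = shift p)
    {x : ι →₀ R} {p : ι} (hmax : ∀ q ∈ x.support, height q ≤ height p) :
    T x (shift p) = x p * T (single p 1) (shift p) := by
  conv_lhs => rw [← x.sum_single]
  simp only [Finsupp.sum, map_sum, finsetSum_apply]
  rw [Finset.sum_eq_single p]
  · rw [← smul_single_one, map_smul, smul_apply, smul_eq_mul]
  · intro q hq hqp
    rw [← smul_single_one, map_smul, smul_apply, smul_eq_mul]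
    by_contra hne
    rcases hsupp q (shift p) (mem_support_iff.mpr (right_ne_zero_of_mul hne)) with hle | heq
    · have := hmax q hq
      have := hheight p
      omega
    · exact hqp (hshift heq).symm
  · intro hp
    rw [notMem_support_iff.mp hp, single_zero, map_zero, zero_apply]

theorem eq_zero_of_apply_eq_smul [NoZeroDivisors R] (hshift : shift.Injective)
    (hheight : ∀ p, height (shift p) = height p + 1)
    (hsupp : ∀ p, ∀ q ∈ (T (single p 1)).support, height q ≤ height p ∨ q = shift p)
    (hlead : ∀ p, T (single p 1) (shift p) ≠ 0) {x : ι →₀ R} {μ : R} (hx : T x = μ • x) :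
    x = 0 := by
  by_contra hx0
  obtain ⟨p, hp, hmax⟩ := x.support.exists_max_image height (support_nonempty_iff.mpr hx0)
  have hshiftp : x (shift p) = 0 := by
    by_contra h
    have := hmax _ (mem_support_iff.mpr h)
    have := hheight p
    omega
  have := apply_shift_eq_of_height_le T height shift hshift hheight hsupp hmax
  rw [hx, smul_apply, hshiftp, smul_zero] at this
  exact mul_ne_zero (mem_support_iff.mp hp) (hlead p) this.symm

end Finsupp

theorem eq_of_mem_support_smul_vb {a : ℂ} {i r₁ r₂ : ℤ} {q : ℤ × ℤ × ℤ}
    (hq : q ∈ (a • vb i r₁ r₂).support) : q = (i, r₁, r₂) :=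
  Finset.mem_singleton.mp (Finsupp.support_single_subset (Finsupp.support_smul hq))

theorem add_intCast_ne_zero_of_forall_ne_intCast {R : Type*} [AddGroupWithOne R] {z : R}
    (hz : ∀ m : ℤ, z ≠ m) (n : ℤ) : z + n ≠ 0 :=
  fun h => hz (-n) (by push_cast; exact eq_neg_of_add_eq_zero_left h)

section Action

variable (α₁ α₂ lam b c : ℂ) (i r₁ r₂ : ℤ)

theorem Eb12_comp_Eb21_vb :
    (Eb12 α₁ α₂ lam b c ∘ₗ Eb21 α₁ α₂ lam b c) (vb i r₁ r₂)
      = ((c - lam - i) * (lam + i - 1 - b + (r₂ + 1) + α₂)) • vb (i - 1) r₁ r₂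
        + ((c - lam - i) * (c + lam + i - 1)
            + (r₁ + α₁ - lam - i - b) * (lam + i - b + (r₂ + 1) + α₂)) • vb i r₁ r₂
        + ((r₁ + α₁ - lam - i - b) * (c + lam + i)) • vb (i + 1) r₁ r₂ := by
  simp only [vb, LinearMap.comp_apply, Eb12, Eb21, Finsupp.lsum_single, LinearMap.add_apply,
    LinearMap.smul_apply, Finsupp.lsingle_apply, map_add, map_smul, sub_add_cancel,
    add_sub_cancel_right, smul_smul, smul_add, add_smul]
  push_cast
  module

theorem Eb23_comp_Eb32_vb :
    (Eb23 α₁ α₂ lam b c ∘ₗ Eb32 α₁ α₂ lam b c) (vb i r₁ r₂)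
      = (-((r₂ + α₂ - b + lam + i) * (c - lam - i))) • vb (i - 1) r₁ r₂
        + (-((r₂ + α₂ - b + lam + i) * (r₁ + α₁ + (r₂ - 1) + α₂ + b - lam - i))) • vb i r₁ r₂ := by
  simp only [vb, LinearMap.comp_apply, Eb23, Eb32, Finsupp.lsum_single, LinearMap.add_apply,
    LinearMap.smul_apply, LinearMap.neg_apply, Finsupp.lsingle_apply, map_smul, sub_add_cancel,
    smul_smul, smul_add, smul_neg, neg_smul]
  push_cast
  module

theorem Eb13_comp_Eb31_vb :
    (Eb13 α₁ α₂ lam b c ∘ₗ Eb31 α₁ α₂ lam b c) (vb i r₁ r₂)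
      = (-((r₁ + α₁ - b - lam - i) * ((r₁ - 1) + α₁ + r₂ + α₂ + b + lam + i))) • vb i r₁ r₂
        + (-((r₁ + α₁ - b - lam - i) * (c + lam + i))) • vb (i + 1) r₁ r₂ := by
  simp only [vb, LinearMap.comp_apply, Eb13, Eb31, Finsupp.lsum_single, LinearMap.add_apply,
    LinearMap.smul_apply, LinearMap.neg_apply, Finsupp.lsingle_apply, map_smul, sub_add_cancel,
    smul_smul, smul_add, smul_neg, neg_smul]
  push_cast
  module

end Action

section NoEigenvectors

variable {α₁ α₂ lam b c : ℂ}

theorem Eb12_comp_Eb21_eq_zero_of_eq_smul (h1 : ∀ m : ℤ, c + lam ≠ (m : ℂ))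
    (h3 : ∀ m : ℤ, α₁ - b - lam ≠ (m : ℂ)) {x : F3} {μ : ℂ}
    (hx : (Eb12 α₁ α₂ lam b c ∘ₗ Eb21 α₁ α₂ lam b c) x = μ • x) : x = 0 := by
  refine Finsupp.eq_zero_of_apply_eq_smul _ Prod.fst (fun p => (p.1 + 1, p.2))
    (fun p q h => by simpa [Prod.ext_iff] using h) (fun _ => rfl) ?_ ?_ hx
  · rintro ⟨i, r₁, r₂⟩ q hq
    rw [← vb, Eb12_comp_Eb21_vb] at hq
    rcases Finset.mem_union.mp (Finsupp.support_add hq) with hq | hq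
    · rcases Finset.mem_union.mp (Finsupp.support_add hq) with hq | hq <;>
        simp [eq_of_mem_support_smul_vb hq]
    · simp [eq_of_mem_support_smul_vb hq]
  · rintro ⟨i, r₁, r₂⟩
    rw [← vb, Eb12_comp_Eb21_vb]
    simp only [vb, Finsupp.add_apply, Finsupp.smul_apply, Finsupp.single_apply, Prod.mk.injEq,
      show i - 1 ≠ i + 1 by omega, show i ≠ i + 1 by omega, and_true, if_false, if_true,
      smul_eq_mul, mul_zero, mul_one, zero_add]
    refine mul_ne_zero ?_ ?_
    · convert add_intCast_ne_zero_of_forall_ne_intCast h3 (r₁ - i) using 1; push_cast; ring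
    · exact add_intCast_ne_zero_of_forall_ne_intCast h1 i

theorem Eb23_comp_Eb32_eq_zero_of_eq_smul (h2 : ∀ m : ℤ, c - lam ≠ (m : ℂ))
    (h4 : ∀ m : ℤ, α₂ - b + lam ≠ (m : ℂ)) {x : F3} {μ : ℂ}
    (hx : (Eb23 α₁ α₂ lam b c ∘ₗ Eb32 α₁ α₂ lam b c) x = μ • x) : x = 0 := by
  refine Finsupp.eq_zero_of_apply_eq_smul _ (fun p => -p.1) (fun p => (p.1 - 1, p.2))
    (fun p q h => by simpa [Prod.ext_iff] using h) (fun _ => by ring) ?_ ?_ hx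
  · rintro ⟨i, r₁, r₂⟩ q hq
    rw [← vb, Eb23_comp_Eb32_vb] at hq
    rcases Finset.mem_union.mp (Finsupp.support_add hq) with hq | hq <;>
      simp [eq_of_mem_support_smul_vb hq]
  · rintro ⟨i, r₁, r₂⟩
    rw [← vb, Eb23_comp_Eb32_vb]
    simp only [vb, Finsupp.add_apply, Finsupp.smul_apply, Finsupp.single_apply, Prod.mk.injEq,
      show i ≠ i - 1 by omega, and_true, if_false, if_true, smul_eq_mul, mul_zero, mul_one,
      add_zero]
    refine neg_ne_zero.mpr (mul_ne_zero ?_ ?_)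
    · convert add_intCast_ne_zero_of_forall_ne_intCast h4 (r₂ + i) using 1; push_cast; ring
    · convert add_intCast_ne_zero_of_forall_ne_intCast h2 (-i) using 1; push_cast; ring

theorem Eb13_comp_Eb31_eq_zero_of_eq_smul (h1 : ∀ m : ℤ, c + lam ≠ (m : ℂ))
    (h3 : ∀ m : ℤ, α₁ - b - lam ≠ (m : ℂ)) {x : F3} {μ : ℂ}
    (hx : (Eb13 α₁ α₂ lam b c ∘ₗ Eb31 α₁ α₂ lam b c) x = μ • x) : x = 0 := by
  refine Finsupp.eq_zero_of_apply_eq_smul _ Prod.fst (fun p => (p.1 + 1, p.2))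
    (fun p q h => by simpa [Prod.ext_iff] using h) (fun _ => rfl) ?_ ?_ hx
  · rintro ⟨i, r₁, r₂⟩ q hq
    rw [← vb, Eb13_comp_Eb31_vb] at hq
    rcases Finset.mem_union.mp (Finsupp.support_add hq) with hq | hq <;>
      simp [eq_of_mem_support_smul_vb hq]
  · rintro ⟨i, r₁, r₂⟩
    rw [← vb, Eb13_comp_Eb31_vb]
    simp only [vb, Finsupp.add_apply, Finsupp.smul_apply, Finsupp.single_apply, Prod.mk.injEq,
      show i ≠ i + 1 by omega, and_true, if_false, if_true, smul_eq_mul, mul_zero, mul_one,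
      zero_add]
    refine neg_ne_zero.mpr (mul_ne_zero ?_ ?_)
    · convert add_intCast_ne_zero_of_forall_ne_intCast h3 (r₁ - i) using 1; push_cast; ring
    · exact add_intCast_ne_zero_of_forall_ne_intCast h1 i

end NoEigenvectors

theorem no_eigenvectors_general (α₁ α₂ lam b c : ℂ)
    (h1 : ∀ m : ℤ, c + lam ≠ (m : ℂ)) (h2 : ∀ m : ℤ, c - lam ≠ (m : ℂ))
    (h3 : ∀ m : ℤ, α₁ - b - lam ≠ (m : ℂ)) (h4 : ∀ m : ℤ, α₂ - b + lam ≠ (m : ℂ)) :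
    (¬ ∃ x : F3, x ≠ 0 ∧ ∃ μ : ℂ,
        (Eb12 α₁ α₂ lam b c ∘ₗ Eb21 α₁ α₂ lam b c) x = μ • x)
    ∧ (¬ ∃ x : F3, x ≠ 0 ∧ ∃ μ : ℂ,
        (Eb23 α₁ α₂ lam b c ∘ₗ Eb32 α₁ α₂ lam b c) x = μ • x)
    ∧ (¬ ∃ x : F3, x ≠ 0 ∧ ∃ μ : ℂ,
        (Eb13 α₁ α₂ lam b c ∘ₗ Eb31 α₁ α₂ lam b c) x = μ • x) :=
  ⟨fun ⟨_, hx, _, hμ⟩ => hx (Eb12_comp_Eb21_eq_zero_of_eq_smul h1 h3 hμ),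
    fun ⟨_, hx, _, hμ⟩ => hx (Eb23_comp_Eb32_eq_zero_of_eq_smul h2 h4 hμ),
    fun ⟨_, hx, _, hμ⟩ => hx (Eb13_comp_Eb31_eq_zero_of_eq_smul h1 h3 hμ)⟩

/-- With generic parameters, none of the operators Ē₁₂Ē₂₁, Ē₂₃Ē₃₂, Ē₁₃Ē₃₁ has an
    eigenvector in F^α_{2b}(V). -/
theorem no_eigenvectors (α₁ α₂ lam b c : ℂ)
    (h1 : ∀ m : ℤ, c + lam ≠ (m : ℂ)) (h2 : ∀ m : ℤ, c - lam ≠ (m : ℂ))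
    (h3 : ∀ m : ℤ, α₁ - b - lam ≠ (m : ℂ)) (h4 : ∀ m : ℤ, α₂ - b + lam ≠ (m : ℂ))
    (h5 : ∀ m : ℤ, α₁ + 2 * b ≠ (m : ℂ)) (h6 : ∀ m : ℤ, α₂ + 2 * b ≠ (m : ℂ))
    (h7 : ∀ m : ℤ, α₁ + α₂ + b + c ≠ (m : ℂ)) (h8 : ∀ m : ℤ, α₁ + α₂ + b - c ≠ (m : ℂ))
    (h9 : ∀ m : ℤ, c + 3 * b ≠ (m : ℂ)) (h10 : ∀ m : ℤ, c - 3 * b ≠ (m : ℂ)) :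
    (¬ ∃ x : F3, x ≠ 0 ∧ ∃ μ : ℂ,
        (Eb12 α₁ α₂ lam b c ∘ₗ Eb21 α₁ α₂ lam b c) x = μ • x)
    ∧ (¬ ∃ x : F3, x ≠ 0 ∧ ∃ μ : ℂ,
        (Eb23 α₁ α₂ lam b c ∘ₗ Eb32 α₁ α₂ lam b c) x = μ • x)
    ∧ (¬ ∃ x : F3, x ≠ 0 ∧ ∃ μ : ℂ,
        (Eb13 α₁ α₂ lam b c ∘ₗ Eb31 α₁ α₂ lam b c) x = μ • x) :=
  no_eigenvectors_general α₁ α₂ lam b c h1 h2 h3 h4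
end
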